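/- Let 0 ≤ r₀ < r₁ and let (A, w) be an EYM solution on (r₀, r₁) with A(r) > 0 for all r ∈ (r₀, r₁). If there exists ρ ∈ (r₀, r₁) such that A(ρ) ≥ 1 − Λ·ρ²/3, then A(r) converges in the extended real numbers as r → r₀⁺, and its limit is greater than or equal to 1 − Λ·r₀²/3. -/

import Mathlib

/-!
In terms of the Misner–Sharp mass `m`, defined by `A = 1 - 2m/r - Λr²/3`, the first field equation
reads `m' = A w'² + (1 - w²)²/(2r²)`, so `m` is nondecreasing wherever `A ≥ 0`. The hypothesis at `ρ`
says `m(ρ) ≤ 0`, hence `m ≤ 0` on `(r₀, ρ)` and `-2m/r` is nonnegative and nonincreasing there.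
Thus `A = (1 - Λr²/3) + (-2m/r)` is a continuous function plus a monotone nonnegative one, which has
a limit in `EReal` at `r₀⁺`, at least `1 - Λr₀²/3`.
-/

open Filter Topology Set

/-- The quantity Φ(r) = 1 − A(r) − (1 − w(r)²)²/r² − Λ·r². -/
noncomputable def Phi (Λ : ℝ) (A w : ℝ → ℝ) (r : ℝ) : ℝ :=
  1 - A r - (1 - (w r) ^ 2) ^ 2 / r ^ 2 - Λ * r ^ 2

/-- `(A, w)` is a static spherically symmetric Einstein SU(2)-Yang–Mills
solution with cosmological constant `Λ` on the set `I`. -/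
def IsEYM (Λ : ℝ) (A w : ℝ → ℝ) (I : Set ℝ) : Prop :=
  (∀ r ∈ I, DifferentiableAt ℝ A r) ∧
  (∀ r ∈ I, DifferentiableAt ℝ w r) ∧
  (∀ r ∈ I, DifferentiableAt ℝ (deriv w) r) ∧
  (∀ r ∈ I, r * deriv A r + 2 * A r * (deriv w r) ^ 2 = Phi Λ A w r) ∧
  (∀ r ∈ I, r ^ 2 * A r * deriv (deriv w) r + r * Phi Λ A w r * deriv w r
      + w r * (1 - (w r) ^ 2) = 0)

noncomputable def mass (Λ : ℝ) (A : ℝ → ℝ) (r : ℝ) : ℝ :=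
  r * (1 - Λ * r ^ 2 / 3 - A r) / 2

lemma self_eq_add_mass_div (Λ : ℝ) (A : ℝ → ℝ) {r : ℝ} (hr : r ≠ 0) :
    A r = 1 - Λ * r ^ 2 / 3 + -2 * mass Λ A r / r := by
  unfold mass
  field_simp
  ring

lemma mass_nonpos {Λ : ℝ} {A : ℝ → ℝ} {r : ℝ} (hr : 0 ≤ r) (hA : 1 - Λ * r ^ 2 / 3 ≤ A r) :
    mass Λ A r ≤ 0 :=
  div_nonpos_of_nonpos_of_nonneg (mul_nonpos_of_nonneg_of_nonpos hr (by linarith)) zero_le_two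

namespace IsEYM

variable {Λ : ℝ} {A w : ℝ → ℝ} {I : Set ℝ}

theorem hasDerivAt_mass (h : IsEYM Λ A w I) {r : ℝ} (hr : r ∈ I) :
    HasDerivAt (mass Λ A) (A r * deriv w r ^ 2 + (1 - w r ^ 2) ^ 2 / (2 * r ^ 2)) r := by
  have hfield := h.2.2.2.1 r hr
  unfold Phi at hfield
  have hpoly := (hasDerivAt_pow 2 r).const_mul Λ |>.div_const 3
  have hderiv : HasDerivAt (mass Λ A) _ r := ((hasDerivAt_id' r).mul
    (((hasDerivAt_const r 1).sub hpoly).sub (h.1 r hr).hasDerivAt)).div_const 2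
  refine hderiv.congr_deriv ?_
  simp only [Pi.sub_apply]
  linear_combination (-1 / 2 : ℝ) * hfield

theorem monotoneOn_mass (h : IsEYM Λ A w I) (hI : Convex ℝ I) (hA : ∀ r ∈ I, 0 ≤ A r) :
    MonotoneOn (mass Λ A) I := by
  refine monotoneOn_of_hasDerivWithinAt_nonneg hI
    (fun r hr ↦ (h.hasDerivAt_mass hr).continuousAt.continuousWithinAt)
    (fun r hr ↦ (h.hasDerivAt_mass (interior_subset hr)).hasDerivWithinAt) fun r hr ↦ ?_
  have := hA r (interior_subset hr)
  positivity

end IsEYM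

lemma AntitoneOn.div_self {f : ℝ → ℝ} {s : Set ℝ} (hs : s ⊆ Ioi 0) (hf : AntitoneOn f s)
    (hf₀ : ∀ x ∈ s, 0 ≤ f x) : AntitoneOn (fun x ↦ f x / x) s := fun x hx y hy hxy ↦
  calc f y / y ≤ f y / x := div_le_div_of_nonneg_left (hf₀ y hy) (hs hx) hxy
    _ ≤ f x / x := div_le_div_of_nonneg_right (hf hx hy hxy) (le_of_lt (hs hx))

lemma AntitoneOn.exists_tendsto_coe_ereal {g : ℝ → ℝ} {a b : ℝ} (hab : a < b)
    (hg : AntitoneOn g (Ioo a b)) :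
    ∃ L : EReal, Tendsto (fun x ↦ (g x : EReal)) (𝓝[>] a) (𝓝 L) ∧
      ∀ x ∈ Ioo a b, (g x : EReal) ≤ L := by
  have hg' : AntitoneOn (fun x ↦ (g x : EReal)) (Ioo a b) :=
    EReal.coe_strictMono.monotone.comp_antitoneOn hg
  exact ⟨_, hg'.tendsto_nhdsWithin_Ioo_right (nonempty_Ioo.2 hab) (OrderTop.bddAbove _),
    fun x hx ↦ le_sSup (mem_image_of_mem _ hx)⟩

lemma EReal.tendsto_coe_add {α : Type*} {l : Filter α} {c : α → ℝ} {u : α → EReal} {c₀ : ℝ}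
    {L : EReal} (hc : Tendsto c l (𝓝 c₀)) (hu : Tendsto u l (𝓝 L)) :
    Tendsto (fun x ↦ (c x : EReal) + u x) l (𝓝 (c₀ + L)) :=
  (continuousAt_add (.inl (coe_ne_top c₀)) (.inl (coe_ne_bot c₀))).tendsto.comp
    ((tendsto_coe.2 hc).prodMk_nhds hu)

theorem stmt_8_general (Λ r₀ r₁ : ℝ) (A w : ℝ → ℝ)
    (hr₀ : 0 ≤ r₀)
    (hEYM : IsEYM Λ A w (Ioo r₀ r₁))
    (hApos : ∀ r ∈ Ioo r₀ r₁, 0 < A r)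
    (ρ : ℝ) (hρ : ρ ∈ Ioo r₀ r₁) (hAρ : A ρ ≥ 1 - Λ * ρ ^ 2 / 3) :
    Filter.liminf (fun r => (A r : EReal)) (𝓝[>] r₀) =
      Filter.limsup (fun r => (A r : EReal)) (𝓝[>] r₀) ∧
    ((1 - Λ * r₀ ^ 2 / 3 : ℝ) : EReal) ≤
      Filter.limsup (fun r => (A r : EReal)) (𝓝[>] r₀) := by
  have hpos : Ioo r₀ ρ ⊆ Ioi 0 := fun r hr ↦ hr₀.trans_lt hr.1
  have hsub : Ioo r₀ ρ ⊆ Ioo r₀ r₁ := Ioo_subset_Ioo_right hρ.2.le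
  have hmono := hEYM.monotoneOn_mass (convex_Ioo r₀ r₁) fun r hr ↦ (hApos r hr).le
  have hmass : ∀ r ∈ Ioo r₀ ρ, 0 ≤ -2 * mass Λ A r := fun r hr ↦ by
    linarith [hmono (hsub hr) hρ hr.2.le, mass_nonpos (hr₀.trans hρ.1.le) hAρ]
  have hanti : AntitoneOn (fun r ↦ -2 * mass Λ A r / r) (Ioo r₀ ρ) :=
    AntitoneOn.div_self hpos (fun r hr s hs hrs ↦ by linarith [hmono (hsub hr) (hsub hs) hrs]) hmass
  obtain ⟨L, hL, hle⟩ := hanti.exists_tendsto_coe_ereal hρ.1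
  have hdS : Tendsto (fun r : ℝ ↦ 1 - Λ * r ^ 2 / 3) (𝓝[>] r₀) (𝓝 (1 - Λ * r₀ ^ 2 / 3)) :=
    (Continuous.tendsto (by fun_prop) r₀).mono_left nhdsWithin_le_nhds
  have hA : Tendsto (fun r ↦ (A r : EReal)) (𝓝[>] r₀) (𝓝 ((1 - Λ * r₀ ^ 2 / 3 : ℝ) + L)) := by
    refine (EReal.tendsto_coe_add hdS hL).congr' ?_
    filter_upwards [Ioo_mem_nhdsGT hρ.1] with r hr
    rw [self_eq_add_mass_div Λ A (hpos hr).ne', EReal.coe_add]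
  obtain ⟨r, hr⟩ := nonempty_Ioo.2 hρ.1
  have hL₀ : 0 ≤ L := (EReal.coe_nonneg.2 (div_nonneg (hmass r hr) (hpos hr).le)).trans (hle r hr)
  rw [hA.liminf_eq, hA.limsup_eq]
  exact ⟨rfl, le_add_of_nonneg_right hL₀⟩

/-- if `A > 0` on `(r₀, r₁)` and `A(ρ) ≥ 1 − Λρ²/3` for some
`ρ ∈ (r₀, r₁)`, then `A` converges in the extended reals as `r → r₀⁺`, to a
limit `≥ 1 − Λ r₀²/3`. -/
theorem stmt_8 (Λ r₀ r₁ : ℝ) (A w : ℝ → ℝ)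
    (hr₀ : 0 ≤ r₀) (hr₁ : r₀ < r₁)
    (hEYM : IsEYM Λ A w (Ioo r₀ r₁))
    (hApos : ∀ r ∈ Ioo r₀ r₁, 0 < A r)
    (ρ : ℝ) (hρ : ρ ∈ Ioo r₀ r₁) (hAρ : A ρ ≥ 1 - Λ * ρ ^ 2 / 3) :
    Filter.liminf (fun r => (A r : EReal)) (𝓝[>] r₀) =
      Filter.limsup (fun r => (A r : EReal)) (𝓝[>] r₀) ∧
    ((1 - Λ * r₀ ^ 2 / 3 : ℝ) : EReal) ≤
      Filter.limsup (fun r => (A r : EReal)) (𝓝[>] r₀) :=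
  stmt_8_general Λ r₀ r₁ A w hr₀ hEYM hApos ρ hρ hAρ
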